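/- arXiv:2211.17069 — 2 statements merged into one kernel-verified Lean document; each statement's English description precedes it below -/
import Mathlib

section
/- Let v : [0, l] → [0,1] be a concave function with v(0) = 1, v > 0 on [0,l), and let q > 0, and suppose r_0 ∈ (0,l) is a maximizer of r ↦ r^{qα} v(r). Then v(r_0) ≥ 1/(1 + qα), with equality if and only if v(r) = v(r_0)(1 − (qα/r_0)(r − r_0)) for all r ∈ [0, r_0). -/
open Set

/-- Core algebraic inequality: if `0 < x` is small enough, then
`(1-x)^β * (1+μ*x) > 1`. -/
lemma core_ineq (β μ x : ℝ) (hβ : 0 < β) (hμ : β < μ) (hx0 : 0 < x)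
    (hx : x ≤ (μ - β) / (2 * (1 + β) * μ)) : 1 < (1 - x) ^ β * (1 + μ * x) := by
  have hμ0 : 0 < μ := hβ.trans hμ
  have hden : 0 < 2 * (1 + β) * μ := by positivity
  have hx' : 2 * (1 + β) * μ * x ≤ μ - β := by
    rw [le_div_iff₀ hden] at hx
    nlinarith
  have hxhalf : x < 1 / 2 := by nlinarith
  have h1x : 0 < 1 - x := by linarith
  have hbern : 1 + (β + 1) * (-x) ≤ (1 + (-x)) ^ (β + 1) :=
    one_add_mul_self_le_rpow_one_add (by linarith) (by linarith)
  have hsplit : (1 + (-x)) ^ (β + 1) = (1 - x) ^ β * (1 - x) := by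
    have h : (1 + (-x)) = (1 - x) := by ring
    rw [h, Real.rpow_add_one (ne_of_gt h1x)]
  rw [hsplit] at hbern
  have h2 : 0 < 1 + μ * x := by positivity
  have hmul : (1 - (β + 1) * x) * (1 + μ * x) ≤ (1 - x) ^ β * (1 - x) * (1 + μ * x) := by
    have h3 : 1 - (β + 1) * x ≤ (1 - x) ^ β * (1 - x) := by linarith
    nlinarith
  have hkey : 1 - x < (1 - (β + 1) * x) * (1 + μ * x) := by nlinarith
  have hfin : 1 * (1 - x) < (1 - x) ^ β * (1 + μ * x) * (1 - x) := by nlinarith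
  exact lt_of_mul_lt_mul_right hfin h1x.le

/-- If the slope `m` beats `β * V / r₀`, the function `r ↦ r^β * (V + m*(r₀ - r))`
exceeds `r₀^β * V` somewhere in `(a, r₀)`. -/
lemma exists_big (β V r₀ m a : ℝ) (hβ : 0 < β) (hV : 0 < V) (ha : 0 ≤ a)
    (har : a < r₀) (hm : β * V / r₀ < m) :
    ∃ r, a < r ∧ r < r₀ ∧ r₀ ^ β * V < r ^ β * (V + m * (r₀ - r)) := by
  have hr₀ : 0 < r₀ := lt_of_le_of_lt ha har
  set μ := m * r₀ / V with hμdef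
  have hmr : β * V < m * r₀ := by
    rw [div_lt_iff₀ hr₀] at hm; linarith
  have hμβ : β < μ := by
    rw [hμdef, lt_div_iff₀ hV]; nlinarith
  have hμ0 : 0 < μ := hβ.trans hμβ
  have hmV : m * r₀ = μ * V := by rw [hμdef, div_mul_cancel₀ _ hV.ne']
  set x := min ((μ - β) / (2 * (1 + β) * μ)) ((r₀ - a) / (2 * r₀)) with hxdef
  have hx0 : 0 < x :=
    lt_min (div_pos (by linarith) (by positivity)) (div_pos (by linarith) (by positivity))
  have hx1 : x ≤ (μ - β) / (2 * (1 + β) * μ) := min_le_left _ _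
  have hx2 : x ≤ (r₀ - a) / (2 * r₀) := min_le_right _ _
  have hcore := core_ineq β μ x hβ hμβ hx0 hx1
  have hxhalf : x < 1 := by
    have hden : 0 < 2 * (1 + β) * μ := by positivity
    have h : (μ - β) / (2 * (1 + β) * μ) < 1 := by
      rw [div_lt_iff₀ hden]; nlinarith
    linarith
  refine ⟨r₀ * (1 - x), ?_, ?_, ?_⟩
  · rw [le_div_iff₀ (by positivity)] at hx2
    nlinarith
  · nlinarith
  · have h1x : 0 < 1 - x := by linarith
    have hrw : (r₀ * (1 - x)) ^ β = r₀ ^ β * (1 - x) ^ β :=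
      Real.mul_rpow hr₀.le h1x.le
    have hrest : V + m * (r₀ - r₀ * (1 - x)) = V * (1 + μ * x) := by
      have h : m * (r₀ - r₀ * (1 - x)) = m * r₀ * x := by ring
      rw [h, hmV]; ring
    rw [hrw, hrest]
    have hr₀β : 0 < r₀ ^ β := Real.rpow_pos_of_pos hr₀ β
    calc r₀ ^ β * V = r₀ ^ β * V * 1 := by ring
      _ < r₀ ^ β * V * ((1 - x) ^ β * (1 + μ * x)) := by
          apply mul_lt_mul_of_pos_left hcore (by positivity)
      _ = r₀ ^ β * (1 - x) ^ β * (V * (1 + μ * x)) := by ring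

/-- Chord inequality for concave functions. -/
lemma chord_le (l : ℝ) (v : ℝ → ℝ) (hconc : ConcaveOn ℝ (Icc 0 l) v) {x y r : ℝ}
    (hx : x ∈ Icc 0 l) (hy : y ∈ Icc 0 l) (hxy : x < y) (hr : r ∈ Icc x y) :
    ((y - r) / (y - x)) * v x + ((r - x) / (y - x)) * v y ≤ v r := by
  have hyx : 0 < y - x := sub_pos.mpr hxy
  have ha : 0 ≤ (y - r) / (y - x) := div_nonneg (by linarith [hr.2]) hyx.le
  have hb : 0 ≤ (r - x) / (y - x) := div_nonneg (by linarith [hr.1]) hyx.le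
  have hab : (y - r) / (y - x) + (r - x) / (y - x) = 1 := by field_simp; ring
  have h := hconc.2 hx hy ha hb hab
  have hcomb : ((y - r) / (y - x)) • x + ((r - x) / (y - x)) • y = r := by
    simp only [smul_eq_mul]; field_simp; ring
  rw [hcomb] at h
  simpa [smul_eq_mul] using h

theorem maximizer_value_lower_bound (l q α : ℝ) (hl : 0 < l) (hq : 0 < q) (hα : 0 < α)
    (v : ℝ → ℝ) (hconc : ConcaveOn ℝ (Icc 0 l) v)
    (hrange : ∀ r ∈ Icc 0 l, v r ∈ Icc (0:ℝ) 1) (hv0 : v 0 = 1)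
    (hpos : ∀ r ∈ Ico 0 l, 0 < v r)
    (r₀ : ℝ) (hr₀ : r₀ ∈ Ioo 0 l)
    (hmax : ∀ r ∈ Icc 0 l, r ^ (q * α) * v r ≤ r₀ ^ (q * α) * v r₀) :
    1 / (1 + q * α) ≤ v r₀ ∧
      (v r₀ = 1 / (1 + q * α) ↔
        ∀ r ∈ Ico 0 r₀, v r = v r₀ * (1 - (q * α / r₀) * (r - r₀))) := by
  set β := q * α with hβdef
  have hβ : 0 < β := by positivity
  obtain ⟨hr₀0, hr₀l⟩ := hr₀
  have hV : 0 < v r₀ := hpos r₀ ⟨hr₀0.le, hr₀l⟩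
  set V := v r₀ with hVdef
  have h0mem : (0:ℝ) ∈ Icc (0:ℝ) l := ⟨le_refl _, hl.le⟩
  have hr₀mem : r₀ ∈ Icc (0:ℝ) l := ⟨hr₀0.le, hr₀l.le⟩
  have h1β : 0 < 1 + β := by linarith
  -- generic contradiction: v above a steep line on [a, r₀] is impossible
  have contra : ∀ a m : ℝ, 0 ≤ a → a < r₀ → β * V / r₀ < m →
      (∀ s ∈ Icc a r₀, V + m * (r₀ - s) ≤ v s) → False := by
    intro a m ha har hm hline
    obtain ⟨r, har', hrr₀, hbig⟩ := exists_big β V r₀ m a hβ hV ha har hm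
    have hrmem : r ∈ Icc (0:ℝ) l := ⟨ha.trans har'.le, (hrr₀.trans hr₀l).le⟩
    have h1 : V + m * (r₀ - r) ≤ v r := hline r ⟨har'.le, hrr₀.le⟩
    have h2 : r ^ β * (V + m * (r₀ - r)) ≤ r ^ β * v r :=
      mul_le_mul_of_nonneg_left h1 (Real.rpow_nonneg (ha.trans har'.le) β)
    have h3 := hmax r hrmem
    linarith
  have hmain : 1 / (1 + β) ≤ V := by
    by_contra h
    push_neg at h
    rw [lt_div_iff₀ h1β] at h
    -- h : V * (1 + β) < 1
    refine contra 0 ((1 - V) / r₀) le_rfl hr₀0 ?_ ?_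
    · rw [div_lt_div_iff₀ hr₀0 hr₀0]
      nlinarith
    · intro s hs
      have hc := chord_le l v hconc h0mem hr₀mem hr₀0 hs
      rw [hv0] at hc
      have heq : ((r₀ - s) / (r₀ - 0)) * 1 + ((s - 0) / (r₀ - 0)) * V
          = V + (1 - V) / r₀ * (r₀ - s) := by
        field_simp
        ring
      linarith [heq ▸ hc]
  refine ⟨hmain, ?_, ?_⟩
  · intro hVeq r hr
    obtain ⟨hrge0, hrlt⟩ := hr
    have hVβ : V * (1 + β) = 1 := by
      rw [hVeq]; field_simp
    have hrr : 0 < r₀ - r := by linarith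
    -- lower bound from chord between 0 and r₀
    have hlow : V * (1 - β / r₀ * (r - r₀)) ≤ v r := by
      have hc := chord_le l v hconc h0mem hr₀mem hr₀0 ⟨hrge0, hrlt.le⟩
      rw [hv0] at hc
      have heq : ((r₀ - r) / (r₀ - 0)) * 1 + ((r - 0) / (r₀ - 0)) * V
          = V * (1 - β / r₀ * (r - r₀)) := by
        field_simp
        nlinarith [hVβ, congrArg (fun t => r₀ * (r₀ - r) * t) hVβ]
      linarith [heq ▸ hc]
    -- upper bound from maximality
    have hupp : v r ≤ V * (1 - β / r₀ * (r - r₀)) := by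
      by_contra hlt
      push_neg at hlt
      have hLrw : V * (1 - β / r₀ * (r - r₀)) = V + β * V * (r₀ - r) / r₀ := by
        field_simp; ring
      rw [hLrw] at hlt
      refine contra r ((v r - V) / (r₀ - r)) hrge0 hrlt ?_ ?_
      · rw [div_lt_div_iff₀ hr₀0 hrr]
        have h5 : β * V * (r₀ - r) / r₀ < v r - V := by linarith
        rw [div_lt_iff₀ hr₀0] at h5
        nlinarith
      · intro s hs
        have hrmem : r ∈ Icc (0:ℝ) l := ⟨hrge0, (hrlt.trans hr₀l).le⟩
        have hc := chord_le l v hconc hrmem hr₀mem hrlt hs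
        have heq : ((r₀ - s) / (r₀ - r)) * v r + ((s - r) / (r₀ - r)) * V
            = V + (v r - V) / (r₀ - r) * (r₀ - s) := by
          field_simp
          ring
        linarith [heq ▸ hc]
    linarith
  · intro hlin
    have h0 := hlin 0 ⟨le_refl 0, hr₀0⟩
    rw [hv0] at h0
    have heq : V * (1 - β / r₀ * (0 - r₀)) = V * (1 + β) := by
      field_simp
      ring
    rw [heq] at h0
    rw [eq_div_iff (ne_of_gt h1β)]
    linarith
end

section
/- If g : ℝ^n → [0,∞) is integrable with g(0) > 0, then the Ball body K_n(g) satisfies |K_n(g)| = ∫_{ℝ^n} g(x)/g(0) dx. -/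
open MeasureTheory Set Pointwise
open scoped ENNReal

variable {n : ℕ}

/-- Ball's body `K_p(g) = {x : p ∫_0^∞ r^{p-1} g(rx) dr ≥ g(0)}`. -/
noncomputable def ballBody (g : EuclideanSpace ℝ (Fin n) → ℝ) (p : ℝ) :
    Set (EuclideanSpace ℝ (Fin n)) :=
  {x | g 0 ≤ p * ∫ r in Set.Ioi (0:ℝ), r ^ (p - 1) * g (r • x)}

/-- The generalized binomial coefficient `binom(x,y) = Γ(1+x)/(Γ(1+y)Γ(1+x-y))`. -/
noncomputable def gbinom (x y : ℝ) : ℝ :=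
  Real.Gamma (1 + x) / (Real.Gamma (1 + y) * Real.Gamma (1 + x - y))

/-- A convex body: compact, convex, with nonempty interior. -/
def IsConvexBody (K : Set (EuclideanSpace ℝ (Fin n))) : Prop :=
  IsCompact K ∧ Convex ℝ K ∧ (interior K).Nonempty

open Metric in
open scoped ENNReal in
lemma polar_lintegral (hn : 0 < n) (f : EuclideanSpace ℝ (Fin n) → ℝ≥0∞) (hf : Measurable f) :
    ∫⁻ x, f x = ∫⁻ u, (∫⁻ r in Ioi (0:ℝ),
        ENNReal.ofReal (r ^ (n-1)) * f (r • (u : EuclideanSpace ℝ (Fin n))))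
      ∂(volume : Measure (EuclideanSpace ℝ (Fin n))).toSphere := by
  haveI : Nonempty (Fin n) := Fin.pos_iff_nonempty.mp hn
  haveI : Nontrivial (EuclideanSpace ℝ (Fin n)) := inferInstance
  have hdim : Module.finrank ℝ (EuclideanSpace ℝ (Fin n)) = n := finrank_euclideanSpace_fin
  have hmeas : Measurable fun p : sphere (0:EuclideanSpace ℝ (Fin n)) 1 × Ioi (0:ℝ) =>
      f ((p.2 : ℝ) • (p.1 : EuclideanSpace ℝ (Fin n))) :=
    hf.comp ((measurable_subtype_coe.comp measurable_snd).smul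
      (measurable_subtype_coe.comp measurable_fst))
  have h1 : ∫⁻ x, f x
      = ∫⁻ x : ({0}ᶜ : Set (EuclideanSpace ℝ (Fin n))), f x
        ∂((volume : Measure (EuclideanSpace ℝ (Fin n))).comap (↑)) := by
    rw [lintegral_subtype_comap (measurableSet_singleton (0:EuclideanSpace ℝ (Fin n))).compl,
      MeasureTheory.restrict_compl_singleton]
  have hmp := (volume : Measure (EuclideanSpace ℝ (Fin n))).measurePreserving_homeomorphUnitSphereProd
  have h2 : ∫⁻ x : ({0}ᶜ : Set (EuclideanSpace ℝ (Fin n))), f x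
        ∂((volume : Measure (EuclideanSpace ℝ (Fin n))).comap (↑))
      = ∫⁻ p : sphere (0:EuclideanSpace ℝ (Fin n)) 1 × Ioi (0:ℝ), f ((p.2 : ℝ) • (p.1 : EuclideanSpace ℝ (Fin n)))
        ∂((volume : Measure (EuclideanSpace ℝ (Fin n))).toSphere.prod
            (Measure.volumeIoiPow (Module.finrank ℝ (EuclideanSpace ℝ (Fin n)) - 1))) := by
    rw [← hmp.lintegral_comp hmeas]
    refine lintegral_congr fun x => ?_
    congr 1
    simp only [homeomorphUnitSphereProd_apply_snd_coe, homeomorphUnitSphereProd_apply_fst_coe]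
    rw [smul_inv_smul₀ (norm_ne_zero_iff.2 x.2)]
  rw [h1, h2, hdim, lintegral_prod _ hmeas.aemeasurable]
  refine lintegral_congr fun u => ?_
  show (∫⁻ y : Ioi (0:ℝ), f ((y : ℝ) • (u : EuclideanSpace ℝ (Fin n)))
      ∂((volume : Measure ℝ).comap Subtype.val).withDensity
        (fun r : Ioi (0:ℝ) => ENNReal.ofReal ((r:ℝ) ^ (n-1)))) = _
  have hg : Measurable fun y : Ioi (0:ℝ) => f ((y : ℝ) • (u : EuclideanSpace ℝ (Fin n))) := by
    fun_prop
  rw [lintegral_withDensity_eq_lintegral_mul _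
    ((measurable_subtype_coe.pow_const _).ennreal_ofReal) hg]
  rw [← lintegral_subtype_comap measurableSet_Ioi
    (fun t : ℝ => ENNReal.ofReal (t ^ (n-1)) * f (t • (u : EuclideanSpace ℝ (Fin n))))]
  exact lintegral_congr fun r => rfl

open Metric in
open scoped ENNReal in
lemma volume_ballBody_meas (hn : 0 < n) (g : EuclideanSpace ℝ (Fin n) → ℝ)
    (hg0 : ∀ x, 0 ≤ g x) (hgm : Measurable g)
    (hint : Integrable g) (hgpos : 0 < g 0) :
    volume (ballBody g n) = ENNReal.ofReal ((∫ x, g x) / g 0) := by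
  have hn' : (0:ℝ) < n := Nat.cast_pos.mpr hn
  -- the radial integral with natural power
  set In : EuclideanSpace ℝ (Fin n) → ℝ :=
    fun x => ∫ r in Ioi (0:ℝ), r ^ (n-1) * g (r • x) with hIn
  have hcast : ((n:ℝ) - 1) = ((n-1 : ℕ) : ℝ) := by
    push_cast [Nat.cast_sub hn]; ring
  have hJ : ∀ x, (∫ r in Ioi (0:ℝ), r ^ ((n:ℝ) - 1) * g (r • x)) = In x := by
    intro x
    refine setIntegral_congr_fun measurableSet_Ioi fun r hr => ?_
    rw [hcast, Real.rpow_natCast]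
  have hmem : ∀ x, x ∈ ballBody g n ↔ g 0 ≤ n * In x := by
    intro x
    simp only [ballBody, mem_setOf_eq, hJ]
  have hInnonneg : ∀ x, 0 ≤ In x := fun x =>
    setIntegral_nonneg measurableSet_Ioi fun r hr =>
      mul_nonneg (pow_nonneg (le_of_lt hr) _) (hg0 _)
  -- measurability of In
  have hjoint : Measurable fun p : EuclideanSpace ℝ (Fin n) × ℝ =>
      p.2 ^ (n-1) * g (p.2 • p.1) := by fun_prop
  have hInmeas : Measurable In :=
    (hjoint.stronglyMeasurable.integral_prod_right').measurable
  have hK : MeasurableSet (ballBody g (n:ℝ)) := by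
    have : ballBody g (n:ℝ) = (fun x => (n:ℝ) * In x) ⁻¹' Ici (g 0) := by
      ext x; simpa [mem_preimage, mem_Ici] using hmem x
    rw [this]
    exact (measurable_const.mul hInmeas) measurableSet_Ici
  -- homogeneity
  have hhom : ∀ (x : EuclideanSpace ℝ (Fin n)) (c : ℝ), 0 < c →
      In (c • x) = (c ^ n)⁻¹ * In x := by
    intro x c hc
    have hcn : (c:ℝ) ^ (n-1) ≠ 0 := pow_ne_zero _ hc.ne'
    have step1 : In (c • x)
        = ∫ r in Ioi (0:ℝ), (c ^ (n-1))⁻¹ * ((fun t => t ^ (n-1) * g (t • x)) (c * r)) := by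
      refine setIntegral_congr_fun measurableSet_Ioi fun r hr => ?_
      have hsm : r • c • x = (c * r) • x := by rw [smul_smul, mul_comm]
      simp only [hsm, mul_pow]
      field_simp
    rw [step1, MeasureTheory.integral_const_mul,
      integral_comp_mul_left_Ioi (fun t => t ^ (n-1) * g (t • x)) 0 hc, mul_zero,
      smul_eq_mul, ← mul_assoc, ← mul_inv]
    congr 2
    rw [← pow_succ, Nat.sub_add_cancel hn]
  -- radial description of membership
  set R : EuclideanSpace ℝ (Fin n) → ℝ :=
    fun u => ((n : ℝ) * In u / g 0) ^ ((n:ℝ)⁻¹) with hR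
  have hRnonneg : ∀ u, 0 ≤ R u := fun u => Real.rpow_nonneg
    (div_nonneg (mul_nonneg hn'.le (hInnonneg u)) hgpos.le) _
  have hray : ∀ (u : EuclideanSpace ℝ (Fin n)) (r : ℝ), 0 < r →
      (r • u ∈ ballBody g n ↔ r ≤ R u) := by
    intro u r hr
    rw [hmem (r • u), hhom u r hr]
    have h1 : (n:ℝ) * ((r ^ n)⁻¹ * In u) = ((n:ℝ) * In u) / r ^ n := by ring
    rw [h1, le_div_iff₀ (pow_pos hr n), hR,
      Real.le_rpow_inv_iff_of_pos hr.le
        (div_nonneg (mul_nonneg hn'.le (hInnonneg u)) hgpos.le) hn',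
      Real.rpow_natCast, le_div_iff₀ hgpos, mul_comm (g 0) (r ^ n)]
  -- inner integral
  have hinner : ∀ u : EuclideanSpace ℝ (Fin n),
      (∫⁻ r in Ioi (0:ℝ), ENNReal.ofReal (r ^ (n-1)) *
        (ballBody g (n:ℝ)).indicator (1 : EuclideanSpace ℝ (Fin n) → ℝ≥0∞) (r • u))
      = ENNReal.ofReal (In u / g 0) := by
    intro u
    have hIocR : ∀ r ∈ Ioi (0:ℝ),
        ENNReal.ofReal (r ^ (n-1)) *
          (ballBody g (n:ℝ)).indicator (1 : EuclideanSpace ℝ (Fin n) → ℝ≥0∞) (r • u)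
        = (Ioc (0:ℝ) (R u)).indicator (fun r => ENNReal.ofReal (r ^ (n-1))) r := by
      intro r hr
      by_cases hrR : r ≤ R u
      · rw [indicator_of_mem ((hray u r hr).mpr hrR),
          indicator_of_mem (show r ∈ Ioc (0:ℝ) (R u) from ⟨hr, hrR⟩), Pi.one_apply, mul_one]
      · rw [indicator_of_notMem (fun hm' => hrR ((hray u r hr).mp hm')),
          indicator_of_notMem (fun h : r ∈ Ioc (0:ℝ) (R u) => hrR h.2), mul_zero]
    rw [setLIntegral_congr_fun measurableSet_Ioi hIocR]
    rw [lintegral_indicator measurableSet_Ioc, Measure.restrict_restrict measurableSet_Ioc,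
      inter_eq_left.mpr Ioc_subset_Ioi_self]
    have hInt : IntegrableOn (fun r : ℝ => r ^ (n-1)) (Ioc (0:ℝ) (R u)) :=
      (intervalIntegral.intervalIntegrable_pow (n-1)).1
    have hnn : 0 ≤ᵐ[volume.restrict (Ioc (0:ℝ) (R u))] fun r : ℝ => r ^ (n-1) := by
      filter_upwards [ae_restrict_mem measurableSet_Ioc] with r hr
      exact pow_nonneg hr.1.le _
    rw [← ofReal_integral_eq_lintegral_ofReal hInt hnn]
    congr 1
    rw [← intervalIntegral.integral_of_le (hRnonneg u), integral_pow, Nat.sub_add_cancel hn,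
      zero_pow hn.ne']
    have hRn : R u ^ n = (n:ℝ) * In u / g 0 := by
      rw [hR, ← Real.rpow_natCast (((n:ℝ) * In u / g 0) ^ ((n:ℝ)⁻¹)) n,
        ← Real.rpow_mul (div_nonneg (mul_nonneg hn'.le (hInnonneg u)) hgpos.le),
        inv_mul_cancel₀ hn'.ne', Real.rpow_one]
    rw [hRn, ← hcast, sub_add_cancel, sub_zero]
    field_simp
  -- lintegral version of In
  set Gl : EuclideanSpace ℝ (Fin n) → ℝ≥0∞ :=
    fun u => ∫⁻ r in Ioi (0:ℝ), ENNReal.ofReal (r ^ (n-1)) * ENNReal.ofReal (g (r • u)) with hGl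
  have hjointl : Measurable fun p : EuclideanSpace ℝ (Fin n) × ℝ =>
      ENNReal.ofReal (p.2 ^ (n-1)) * ENNReal.ofReal (g (p.2 • p.1)) := by fun_prop
  have hGlmeas : Measurable Gl := hjointl.lintegral_prod_right'
  have hInGl : ∀ u, In u = (Gl u).toReal := by
    intro u
    have hnn : 0 ≤ᵐ[volume.restrict (Ioi (0:ℝ))] fun r : ℝ => r ^ (n-1) * g (r • u) := by
      filter_upwards [ae_restrict_mem measurableSet_Ioi] with r hr
      exact mul_nonneg (pow_nonneg (le_of_lt hr) _) (hg0 _)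
    have hsm : AEStronglyMeasurable (fun r : ℝ => r ^ (n-1) * g (r • u))
        (volume.restrict (Ioi (0:ℝ))) :=
      ((by fun_prop : Measurable fun r : ℝ => r ^ (n-1) * g (r • u))).aestronglyMeasurable
    rw [hIn]
    simp only
    rw [integral_eq_lintegral_of_nonneg_ae hnn hsm]
    congr 1
    refine setLIntegral_congr_fun measurableSet_Ioi ?_
    intro r hr
    exact ENNReal.ofReal_mul (pow_nonneg (le_of_lt hr) _)
  -- total mass via polar
  have htot : ∫⁻ u : ↑(sphere (0:EuclideanSpace ℝ (Fin n)) 1), Gl ↑u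
        ∂(volume : Measure (EuclideanSpace ℝ (Fin n))).toSphere
      = ENNReal.ofReal (∫ x, g x) :=
    ((polar_lintegral hn (fun x => ENNReal.ofReal (g x)) hgm.ennreal_ofReal).symm.trans
      (ofReal_integral_eq_lintegral_ofReal hint (Filter.Eventually.of_forall hg0)).symm)
  have hfin : ∀ᵐ (u : ↑(sphere (0:EuclideanSpace ℝ (Fin n)) 1)) ∂(volume : Measure (EuclideanSpace ℝ (Fin n))).toSphere, Gl ↑u ≠ ∞ := by
    have hGs : Measurable fun u : ↑(sphere (0:EuclideanSpace ℝ (Fin n)) 1) => Gl ↑u := by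
      fun_prop
    refine (ae_lt_top hGs ?_).mono fun u h => h.ne
    rw [htot]; exact ENNReal.ofReal_ne_top
  -- main computation
  have hvol : volume (ballBody g (n:ℝ)) =
      ∫⁻ u : ↑(sphere (0:EuclideanSpace ℝ (Fin n)) 1), ENNReal.ofReal (In ↑u / g 0)
        ∂(volume : Measure (EuclideanSpace ℝ (Fin n))).toSphere := by
    rw [← lintegral_indicator_one hK,
      polar_lintegral hn _ ((measurable_one.indicator hK))]
    exact lintegral_congr fun u => hinner u
  rw [hvol]
  have hcg : ∀ᵐ (u : ↑(sphere (0:EuclideanSpace ℝ (Fin n)) 1)) ∂(volume : Measure (EuclideanSpace ℝ (Fin n))).toSphere,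
      ENNReal.ofReal (In ↑u / g 0) = Gl ↑u / ENNReal.ofReal (g 0) := by
    filter_upwards [hfin] with u hu
    rw [ENNReal.ofReal_div_of_pos hgpos, hInGl ↑u, ENNReal.ofReal_toReal hu]
  rw [lintegral_congr_ae hcg]
  have hg0ne : ENNReal.ofReal (g 0) ≠ 0 := by
    simp [ENNReal.ofReal_eq_zero, not_le, hgpos]
  have hdiv : ∫⁻ u : ↑(sphere (0:EuclideanSpace ℝ (Fin n)) 1), Gl ↑u / ENNReal.ofReal (g 0)
        ∂(volume : Measure (EuclideanSpace ℝ (Fin n))).toSphere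
      = (∫⁻ u : ↑(sphere (0:EuclideanSpace ℝ (Fin n)) 1), Gl ↑u
          ∂(volume : Measure (EuclideanSpace ℝ (Fin n))).toSphere)
        / ENNReal.ofReal (g 0) := by
    simp only [div_eq_mul_inv]
    exact lintegral_mul_const' _ _ (ENNReal.inv_ne_top.mpr hg0ne)
  rw [hdiv, htot, ENNReal.ofReal_div_of_pos hgpos]

theorem volume_ballBody_n (hn : 0 < n)
    (g : EuclideanSpace ℝ (Fin n) → ℝ) (hg0 : ∀ x, 0 ≤ g x)
    (hint : Integrable g) (hgpos : 0 < g 0) :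
    (volume (ballBody g n)).toReal = ∫ x, g x / g 0 := by
  haveI : Nonempty (Fin n) := Fin.pos_iff_nonempty.mp hn
  haveI : Nontrivial (EuclideanSpace ℝ (Fin n)) := inferInstance
  classical
  have hmg : AEMeasurable g (volume : Measure (EuclideanSpace ℝ (Fin n))) := hint.aemeasurable
  set g' : EuclideanSpace ℝ (Fin n) → ℝ :=
    fun x => if x = 0 then g 0 else max (hmg.mk g x) 0 with hg'
  have hg'meas : Measurable g' := by
    rw [hg']
    exact Measurable.ite measurableSet_eq measurable_const
      (hmg.measurable_mk.max measurable_const)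
  have hg'0 : g' 0 = g 0 := by simp [hg']
  have hg'nonneg : ∀ x, 0 ≤ g' x := by
    intro x
    by_cases hx : x = 0 <;> simp [hg', hx, hgpos.le, le_max_right]
  have hgg' : g =ᵐ[(volume : Measure (EuclideanSpace ℝ (Fin n)))] g' := by
    have h2 : ∀ᵐ x ∂(volume : Measure (EuclideanSpace ℝ (Fin n))), x ∉ ({0} : Set _) :=
      (Set.countable_singleton 0).ae_notMem _
    filter_upwards [hmg.ae_eq_mk, h2] with x hx hx0
    have hx0' : x ≠ 0 := by simpa using hx0
    rw [hg']
    simp only [if_neg hx0', ← hx, max_eq_left (hg0 x)]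
  have hint' : Integrable g' := hint.congr hgg'
  have hg'pos : 0 < g' 0 := by rw [hg'0]; exact hgpos
  -- the two bodies agree a.e.
  set N := toMeasurable (volume : Measure (EuclideanSpace ℝ (Fin n))) {x | g x ≠ g' x} with hNdef
  have hNmeas : MeasurableSet N := measurableSet_toMeasurable _ _
  have hNnull : volume N = 0 := by
    rw [hNdef, measure_toMeasurable]
    exact ae_iff.mp hgg'
  have hAE : ∀ᵐ x ∂(volume : Measure (EuclideanSpace ℝ (Fin n))),
      ∀ᵐ r ∂(volume.restrict (Ioi (0:ℝ))), r • x ∉ N := by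
    have hsmulm : Measurable fun p : EuclideanSpace ℝ (Fin n) × ℝ => p.2 • p.1 := by fun_prop
    have hind : Measurable fun p : EuclideanSpace ℝ (Fin n) × ℝ =>
        N.indicator (1 : EuclideanSpace ℝ (Fin n) → ℝ≥0∞) (p.2 • p.1) :=
      (measurable_one.indicator hNmeas).comp hsmulm
    have hswap : ∫⁻ x, (∫⁻ r in Ioi (0:ℝ),
        N.indicator (1 : EuclideanSpace ℝ (Fin n) → ℝ≥0∞) (r • x)) = 0 := by
      rw [lintegral_lintegral_swap hind.aemeasurable]
      have hz : ∀ r ∈ Ioi (0:ℝ), (∫⁻ x, N.indicator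
          (1 : EuclideanSpace ℝ (Fin n) → ℝ≥0∞) (r • x)) = 0 := by
        intro r hr
        have hpre : ∀ x : EuclideanSpace ℝ (Fin n),
            N.indicator (1 : EuclideanSpace ℝ (Fin n) → ℝ≥0∞) (r • x)
            = ((r • ·) ⁻¹' N).indicator (1 : EuclideanSpace ℝ (Fin n) → ℝ≥0∞) x := by
          intro x
          simp only [Set.indicator_apply, mem_preimage, Pi.one_apply]
        simp_rw [hpre]
        rw [lintegral_indicator_one (hNmeas.preimage (measurable_const_smul r)),
          Measure.addHaar_preimage_smul volume hr.ne', hNnull, mul_zero]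
      rw [setLIntegral_congr_fun measurableSet_Ioi hz]
      simp
    have hmeasF : Measurable fun x : EuclideanSpace ℝ (Fin n) =>
        ∫⁻ r in Ioi (0:ℝ), N.indicator (1 : EuclideanSpace ℝ (Fin n) → ℝ≥0∞) (r • x) :=
      hind.lintegral_prod_right'
    have h0 := (lintegral_eq_zero_iff hmeasF).mp hswap
    filter_upwards [h0] with x hx
    have hxm : Measurable fun r : ℝ =>
        N.indicator (1 : EuclideanSpace ℝ (Fin n) → ℝ≥0∞) (r • x) :=
      (measurable_one.indicator hNmeas).comp (measurable_id.smul_const x)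
    have h1 := (lintegral_eq_zero_iff hxm).mp hx
    filter_upwards [h1] with r hr hmemN
    rw [indicator_of_mem hmemN, Pi.one_apply] at hr
    exact one_ne_zero hr
  have hsets : ballBody g (n:ℝ) =ᵐ[(volume : Measure (EuclideanSpace ℝ (Fin n)))]
      ballBody g' (n:ℝ) := by
    refine Filter.eventuallyEq_set.mpr ?_
    filter_upwards [hAE] with x hx
    have hIeq : (∫ r in Ioi (0:ℝ), r ^ ((n:ℝ)-1) * g (r • x))
        = ∫ r in Ioi (0:ℝ), r ^ ((n:ℝ)-1) * g' (r • x) := by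
      refine integral_congr_ae ?_
      filter_upwards [hx] with r hr
      have : g (r • x) = g' (r • x) := by
        by_contra hne
        exact hr (subset_toMeasurable _ _ hne)
      rw [this]
    simp only [ballBody, mem_setOf_eq, hIeq, hg'0]
  rw [measure_congr hsets, volume_ballBody_meas hn g' hg'nonneg hg'meas hint' hg'pos,
    ENNReal.toReal_ofReal (div_nonneg (integral_nonneg hg'nonneg) hg'pos.le), hg'0,
    integral_div, integral_congr_ae hgg']
end
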